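/- arXiv:2508.18555 — 2 statements merged into one kernel-verified Lean document; each statement's English description precedes it below -/
import Mathlib

section
/- Let k ≥ 2 be an integer and G a simple graph with β^k(G) > 0. Then for every subset U ⊆ V(G) such that G − U has more than one connected component, |U| ≥ β^k(G) · c(G − U), where c(G − U) is the number of components of G − U (i.e., the toughness of G is at least β^k(G)). -/
/-!
Let `G - U` have `c ≥ 2` components. If `c ≥ k`, pick one vertex in each component: a vertex
outside `U` is adjacent to at most one of them (the one in its own component), so as `k ≥ 2`
the `k`-th neighbourhood of this set lies in `U`, and `β^k(G) ≤ |U| / c`. If `c < k`, extend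
two vertices from different components to a `k`-set `S`: a vertex in `Λ^k(S)` is adjacent to
all of `S`, hence cannot lie outside `U`, so `β^k(G) ≤ |U| / k ≤ |U| / c`.
-/

open Finset
open scoped Classical

variable {V : Type*}

/-- The k-th neighborhood: vertices adjacent to at least `k` vertices of `S`. -/
noncomputable def kNbhd [Fintype V] (G : SimpleGraph V) (k : ℕ) (S : Finset V) : Finset V :=
  Finset.univ.filter fun v => k ≤ (S.filter fun u => G.Adj v u).card

/-- The k-th binding number. -/
noncomputable def bindingNum [Fintype V] (G : SimpleGraph V) (k : ℕ) : ℝ :=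
  if h : (Finset.univ.filter fun S : Finset V =>
      k ≤ S.card ∧ kNbhd G k S ≠ Finset.univ).Nonempty then
    (Finset.univ.filter fun S : Finset V =>
      k ≤ S.card ∧ kNbhd G k S ≠ Finset.univ).inf' h
      fun S => ((kNbhd G k S).card : ℝ) / (S.card : ℝ)
  else 0

section BindingNumber

variable [Fintype V] (G : SimpleGraph V) (k : ℕ)

lemma bindingNum_le {S : Finset V} (hS : k ≤ S.card) (hΛ : kNbhd G k S ≠ univ) :
    bindingNum G k ≤ ((kNbhd G k S).card : ℝ) / S.card := by
  have hmem : S ∈ univ.filter fun S : Finset V => k ≤ S.card ∧ kNbhd G k S ≠ univ := by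
    simp [hS, hΛ]
  rw [bindingNum, dif_pos ⟨S, hmem⟩]
  exact inf'_le _ hmem

lemma bindingNum_nonneg : 0 ≤ bindingNum G k := by
  unfold bindingNum
  split_ifs with h
  · exact le_inf' h _ fun S _ => by positivity
  · exact le_rfl

lemma bindingNum_eq_zero_of_card_lt (hV : Fintype.card V < k) : bindingNum G k = 0 := by
  refine dif_neg ?_
  rintro ⟨S, hS⟩
  have := card_le_univ S
  simp only [mem_filter, mem_univ, true_and] at hS
  omega

lemma bindingNum_mul_card_le {S U : Finset V} (hS : k ≤ S.card) (hSU : ¬S ⊆ U)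
    (hΛ : kNbhd G k S ⊆ U) : bindingNum G k * S.card ≤ U.card := by
  obtain ⟨s, hsS, hsU⟩ := not_subset.mp hSU
  have hΛ_ne : kNbhd G k S ≠ univ := fun h => hsU (hΛ (h ▸ mem_univ s))
  have hS_pos : (0 : ℝ) < S.card := by exact_mod_cast card_pos.mpr ⟨s, hsS⟩
  calc bindingNum G k * S.card ≤ ((kNbhd G k S).card : ℝ) / S.card * S.card := by
        gcongr; exact bindingNum_le G k hS hΛ_ne
    _ = (kNbhd G k S).card := div_mul_cancel₀ _ hS_pos.ne'
    _ ≤ U.card := by exact_mod_cast card_le_card hΛ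

end BindingNumber

namespace SimpleGraph

variable {G : SimpleGraph V}

lemma connectedComponentMk_induce_eq_of_adj_out {s : Set V} {v : s}
    {C : (G.induce s).ConnectedComponent} (h : G.Adj v C.out) :
    (G.induce s).connectedComponentMk v = C := by
  rw [← C.out_eq]
  exact ConnectedComponent.connectedComponentMk_eq_of_adj h

variable [Fintype V] {k : ℕ} (U : Finset V)

lemma kNbhd_image_out_subset (hk : 2 ≤ k) :
    kNbhd G k (univ.image fun C : (G.induce (U : Set V)ᶜ).ConnectedComponent => (C.out : V))
      ⊆ U := by
  intro v hv
  by_contra hvU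
  have hsub : ((univ.image fun C : (G.induce (U : Set V)ᶜ).ConnectedComponent =>
      (C.out : V)).filter fun u => G.Adj v u) ⊆
      {(((G.induce (U : Set V)ᶜ).connectedComponentMk ⟨v, hvU⟩).out : V)} := by
    intro u hu
    simp only [mem_filter, mem_image, mem_univ, true_and] at hu
    obtain ⟨⟨C, rfl⟩, hadj⟩ := hu
    rw [mem_singleton, connectedComponentMk_induce_eq_of_adj_out (v := ⟨v, hvU⟩) hadj]
  have := card_le_card hsub
  simp only [kNbhd, mem_filter, mem_univ, true_and] at hv
  simp only [card_singleton] at this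
  omega

lemma kNbhd_subset_of_out_mem {C D : (G.induce (U : Set V)ᶜ).ConnectedComponent} (hCD : C ≠ D)
    {S : Finset V} (hCS : (C.out : V) ∈ S) (hDS : (D.out : V) ∈ S) (hSk : S.card ≤ k) :
    kNbhd G k S ⊆ U := by
  intro v hv
  by_contra hvU
  simp only [kNbhd, mem_filter, mem_univ, true_and] at hv
  have hall : S.filter (fun u => G.Adj v u) = S :=
    eq_of_subset_of_card_le (filter_subset _ _) (hSk.trans hv)
  have hC : G.Adj v C.out := (mem_filter.mp (hall ▸ hCS)).2
  have hD : G.Adj v D.out := (mem_filter.mp (hall ▸ hDS)).2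
  exact hCD <| (connectedComponentMk_induce_eq_of_adj_out (v := ⟨v, hvU⟩) hC).symm.trans
    (connectedComponentMk_induce_eq_of_adj_out hD)

lemma bindingNum_mul_card_connectedComponent_le (hk : 2 ≤ k)
    (hc : k ≤ Nat.card (G.induce (U : Set V)ᶜ).ConnectedComponent) :
    bindingNum G k * Nat.card (G.induce (U : Set V)ᶜ).ConnectedComponent ≤ U.card := by
  set reps := univ.image fun C : (G.induce (U : Set V)ᶜ).ConnectedComponent => (C.out : V)
  have hreps : reps.card = Nat.card (G.induce (U : Set V)ᶜ).ConnectedComponent := by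
    have hinj : Function.Injective fun C : (G.induce (U : Set V)ᶜ).ConnectedComponent =>
        (C.out : V) := fun C D h => by
      rw [← C.out_eq, ← D.out_eq, Subtype.ext h]
    rw [card_image_of_injective _ hinj, card_univ, Nat.card_eq_fintype_card]
  obtain ⟨C⟩ : Nonempty (G.induce (U : Set V)ᶜ).ConnectedComponent :=
    Nat.card_pos_iff.mp (by omega) |>.1
  have hreps_U : ¬reps ⊆ U := fun h => C.out.2 (h (mem_image_of_mem _ (mem_univ C)))
  rw [← hreps]
  exact bindingNum_mul_card_le G k (hreps ▸ hc) hreps_U (kNbhd_image_out_subset U hk)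

lemma bindingNum_mul_le_of_one_lt_card_connectedComponent (hk : 2 ≤ k)
    (hc : 1 < Nat.card (G.induce (U : Set V)ᶜ).ConnectedComponent) :
    bindingNum G k * k ≤ U.card := by
  by_cases hV : Fintype.card V < k
  · simp [bindingNum_eq_zero_of_card_lt G k hV]
  obtain ⟨C, D, hCD⟩ := Finite.one_lt_card_iff_nontrivial.mp hc
  have hpair : ({(C.out : V), (D.out : V)} : Finset V).card ≤ k :=
    card_le_two.trans hk
  obtain ⟨S, hCDS, -, hS⟩ := exists_subsuperset_card_eq (subset_univ _) hpair
    (by rw [card_univ]; omega)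
  have hS_U : ¬S ⊆ U := fun h => C.out.2 (h (hCDS (mem_insert_self _ _)))
  have := bindingNum_mul_card_le G k hS.ge hS_U <|
    kNbhd_subset_of_out_mem U hCD (hCDS (by simp)) (hCDS (by simp)) hS.le
  rwa [hS] at this

end SimpleGraph

theorem stmt_9_general [Fintype V] (k : ℕ) (hk : 2 ≤ k) (G : SimpleGraph V) :
    ∀ U : Finset V,
      1 < Nat.card (G.induce ((↑U : Set V)ᶜ)).ConnectedComponent →
      bindingNum G k * (Nat.card (G.induce ((↑U : Set V)ᶜ)).ConnectedComponent : ℝ) ≤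
        (U.card : ℝ) := by
  intro U hc
  rcases le_or_gt k (Nat.card (G.induce (U : Set V)ᶜ).ConnectedComponent) with hkc | hkc
  · exact SimpleGraph.bindingNum_mul_card_connectedComponent_le U hk hkc
  · calc bindingNum G k * Nat.card (G.induce (U : Set V)ᶜ).ConnectedComponent
        ≤ bindingNum G k * k := by gcongr; exact bindingNum_nonneg G k
      _ ≤ U.card := SimpleGraph.bindingNum_mul_le_of_one_lt_card_connectedComponent U hk hc

theorem stmt_9 [Fintype V] (k : ℕ) (hk : 2 ≤ k) (G : SimpleGraph V)
    (hβ : 0 < bindingNum G k) :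
    ∀ U : Finset V,
      1 < Nat.card (G.induce ((↑U : Set V)ᶜ)).ConnectedComponent →
      bindingNum G k * (Nat.card (G.induce ((↑U : Set V)ᶜ)).ConnectedComponent : ℝ) ≤
        (U.card : ℝ) :=
  stmt_9_general k hk G
end

section
/- Let k ≥ 2 be an integer and G a simple graph of odd order with β^k(G) ≥ 1. Then G is hypomatchable, i.e., for every vertex v, the graph G − v has a perfect matching. -/
open Finset
open scoped Classical

variable {V : Type*}

/-!
If `β^k(G) ≥ 1` with `k ≥ 2`, then deleting any nonempty set `U` of vertices leaves at most `|U|`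
components. Otherwise one builds a set `S` whose `k`-neighbourhood lies inside `U` although
`|S| > |U|`: take one vertex from each component if there are at least `k` components, and
otherwise `U` together with `k - 1 - |U|` vertices from each component (possible because the
minimum degree is at least `k`). A vertex outside `U` then has fewer than `k` neighbours in `S`,
since its neighbours outside `U` lie in its own component.

For `G - v` and a set `W`, the graph `G - v - W` therefore has at most `|W| + 1` components, and
the number of its odd components has the parity of `|V| - 1 - |W| ≡ |W|`, so it is at most `|W|`.
Tutte's theorem finishes the proof.
-/

open Function SimpleGraph

lemma card_filter_adj_union_biUnion_le {G : SimpleGraph V} {ι : Type*} [Fintype ι]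
    {C : ι → Finset V} {U : Finset V} (hdisj : Pairwise (Disjoint on C))
    (hclosed : ∀ i, ∀ x ∈ C i, ∀ y ∉ U, G.Adj x y → y ∈ C i)
    {sub : ι → Finset V} {m : ℕ} (hsub : ∀ i, sub i ⊆ C i) (hsubcard : ∀ i, #(sub i) ≤ m)
    (T : Finset V) {x : V} (hx : x ∉ U) :
    #((T ∪ univ.biUnion sub).filter (G.Adj x)) ≤ #T + m := by
  have hidx : #(univ.filter fun i => x ∈ C i) ≤ 1 :=
    card_le_one.2 fun i hi j hj => by
      by_contra hij
      exact disjoint_left.1 (hdisj hij) (mem_filter.1 hi).2 (mem_filter.1 hj).2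
  have hsubset : (T ∪ univ.biUnion sub).filter (G.Adj x) ⊆
      T ∪ (univ.filter fun i => x ∈ C i).biUnion sub := by
    intro y hy
    simp only [mem_filter, mem_union, mem_biUnion, mem_univ, true_and] at hy ⊢
    obtain ⟨hyT | ⟨i, hyi⟩, hxy⟩ := hy
    · exact .inl hyT
    · exact .inr ⟨i, hclosed i y (hsub i hyi) x hx hxy.symm, hyi⟩
  calc #((T ∪ univ.biUnion sub).filter (G.Adj x))
      ≤ #T + #((univ.filter fun i => x ∈ C i).biUnion sub) :=
        (card_le_card hsubset).trans (card_union_le _ _)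
    _ ≤ #T + #(univ.filter fun i => x ∈ C i) * m := by
        gcongr; exact card_biUnion_le_card_mul _ _ _ fun i _ => hsubcard i
    _ ≤ #T + m := by nlinarith

section BindingNumber

variable [Fintype V] {G : SimpleGraph V} {k : ℕ}

lemma kNbhd_zero (S : Finset V) : kNbhd G 0 S = univ := by
  simp [kNbhd]

lemma exists_kNbhd_ne_univ_of_one_le_bindingNum (hβ : 1 ≤ bindingNum G k) :
    ∃ S : Finset V, k ≤ #S ∧ kNbhd G k S ≠ univ := by
  by_contra! h
  rw [bindingNum, dif_neg (by simpa [Finset.Nonempty] using h)] at hβ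
  norm_num at hβ

lemma card_le_card_kNbhd_of_one_le_bindingNum (hβ : 1 ≤ bindingNum G k) {S : Finset V}
    (hS : k ≤ #S) (hne : kNbhd G k S ≠ univ) : #S ≤ #(kNbhd G k S) := by
  have hmem : S ∈ univ.filter fun S : Finset V => k ≤ #S ∧ kNbhd G k S ≠ univ := by
    simp [hS, hne]
  have hSpos : (0 : ℝ) < #S := by
    rcases Nat.eq_zero_or_pos #S with h | h
    · obtain rfl : k = 0 := by omega
      exact absurd (kNbhd_zero S) hne
    · exact_mod_cast h
  rw [bindingNum, dif_pos ⟨S, hmem⟩] at hβ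
  have h := hβ.trans (Finset.inf'_le _ hmem)
  rw [le_div_iff₀ hSpos, one_mul] at h
  exact_mod_cast h

lemma card_le_of_kNbhd_subset (hβ : 1 ≤ bindingNum G k) {S U : Finset V} (hS : k ≤ #S)
    (hSU : kNbhd G k S ⊆ U) (hU : U ≠ univ) : #S ≤ #U :=
  (card_le_card_kNbhd_of_one_le_bindingNum hβ hS fun h => hU (univ_subset_iff.1 (h ▸ hSU))).trans
    (card_le_card hSU)

lemma le_degree_of_one_le_bindingNum (hβ : 1 ≤ bindingNum G k) (x : V) : k ≤ G.degree x := by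
  by_contra! hx
  obtain ⟨S, hS, -⟩ := exists_kNbhd_ne_univ_of_one_le_bindingNum hβ
  have hne : kNbhd G k univ ≠ univ := fun h => by
    have : x ∈ kNbhd G k univ := by rw [h]; exact mem_univ x
    simp only [kNbhd, ← neighborFinset_eq_filter, card_neighborFinset_eq_degree, mem_filter,
      mem_univ, true_and] at this
    omega
  have := card_le_card_kNbhd_of_one_le_bindingNum hβ (hS.trans (card_le_univ S)) hne
  have := card_lt_card (ssubset_univ_iff.2 hne)
  omega

lemma degree_add_one_le_of_closed {C U : Finset V}
    (hclosed : ∀ y ∈ C, ∀ z ∉ U, G.Adj y z → z ∈ C) {x : V} (hx : x ∈ C) :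
    G.degree x + 1 ≤ #C + #U := by
  have hsub : insert x (G.neighborFinset x) ⊆ C ∪ U := by
    intro y hy
    rcases mem_insert.1 hy with rfl | hy
    · exact mem_union_left _ hx
    · by_cases hyU : y ∈ U
      · exact mem_union_right _ hyU
      · exact mem_union_left _ (hclosed x hx y hyU ((G.mem_neighborFinset x y).1 hy))
  calc G.degree x + 1 = #(insert x (G.neighborFinset x)) := by
        rw [card_insert_of_notMem (G.notMem_neighborFinset_self x), G.card_neighborFinset_eq_degree]
    _ ≤ #C + #U := (card_le_card hsub).trans (card_union_le _ _)

variable {ι : Type*} [Fintype ι] {C : ι → Finset V} {U : Finset V}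

lemma card_add_card_mul_le_of_closed (hβ : 1 ≤ bindingNum G k) (hdisj : Pairwise (Disjoint on C))
    (hclosed : ∀ i, ∀ x ∈ C i, ∀ y ∉ U, G.Adj x y → y ∈ C i) (hU : ∀ i, Disjoint (C i) U)
    (hUV : U ≠ univ) {T : Finset V} (hTU : T ⊆ U) {m : ℕ} (hm : ∀ i, m ≤ #(C i))
    (hlt : #T + m < k) (hk : k ≤ #T + Fintype.card ι * m) :
    #T + Fintype.card ι * m ≤ #U := by
  choose sub hsub hsubcard using fun i => exists_subset_card_eq (hm i)
  have hcard : #(T ∪ univ.biUnion sub) = #T + Fintype.card ι * m := by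
    have hT : Disjoint T (univ.biUnion sub) := (disjoint_biUnion_right _ _ _).2 fun i _ =>
      (hU i).symm.mono hTU (hsub i)
    rw [card_union_of_disjoint hT,
      card_biUnion fun i _ j _ hij => (hdisj hij).mono (hsub i) (hsub j)]
    simp [hsubcard]
  have hN : kNbhd G k (T ∪ univ.biUnion sub) ⊆ U := by
    intro x hx
    by_contra hxU
    have := card_filter_adj_union_biUnion_le hdisj hclosed hsub (fun i => (hsubcard i).le) T hxU
    simp only [kNbhd, mem_filter, mem_univ, true_and] at hx
    exact absurd (hx.trans this) (by omega)
  exact hcard ▸ card_le_of_kNbhd_subset hβ (hcard ▸ hk) hN hUV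

lemma card_le_card_of_closed (hk : 2 ≤ k) (hβ : 1 ≤ bindingNum G k) (hne : ∀ i, (C i).Nonempty)
    (hdisj : Pairwise (Disjoint on C)) (hclosed : ∀ i, ∀ x ∈ C i, ∀ y ∉ U, G.Adj x y → y ∈ C i)
    (hU : ∀ i, Disjoint (C i) U) (hUne : U.Nonempty) : Fintype.card ι ≤ #U := by
  by_contra! ht
  obtain ⟨i₀⟩ : Nonempty ι := Fintype.card_pos_iff.1 (by omega)
  obtain ⟨x₀, hx₀⟩ := hne i₀
  have hUV : U ≠ univ := fun h => disjoint_left.1 (hU i₀) hx₀ (h ▸ mem_univ x₀)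
  have hU1 : 1 ≤ #U := card_pos.2 hUne
  rcases le_or_gt k (Fintype.card ι) with hkι | hιk
  · have := card_add_card_mul_le_of_closed hβ hdisj hclosed hU hUV (empty_subset U)
      (fun i => card_pos.2 (hne i)) (by rw [card_empty]; omega) (by simpa using hkι)
    simp only [card_empty, zero_add] at this
    omega
  · obtain ⟨m, hkm⟩ : ∃ m, k = #U + m + 1 := ⟨k - 1 - #U, by omega⟩
    have hm : ∀ i, m ≤ #(C i) := fun i => by
      obtain ⟨x, hx⟩ := hne i
      have := degree_add_one_le_of_closed (hclosed i) hx
      have := le_degree_of_one_le_bindingNum hβ x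
      omega
    have hmul : (#U + 1) * m ≤ Fintype.card ι * m := Nat.mul_le_mul_right _ ht
    have hm1 : 1 ≤ m := by omega
    have := card_add_card_mul_le_of_closed hβ hdisj hclosed hU hUV subset_rfl hm (by omega)
      (by nlinarith)
    nlinarith

lemma card_connectedComponent_add_card_le (hk : 2 ≤ k) (hβ : 1 ≤ bindingNum G k) {W : Type*}
    [Fintype W] {H : SimpleGraph W} (f : H ↪g G) (hf : ¬ Surjective f) :
    Nat.card H.ConnectedComponent + Fintype.card W ≤ Fintype.card V := by
  set U : Finset V := (univ.map f.toEmbedding)ᶜ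
  have hU : #U + Fintype.card W = Fintype.card V := by
    rw [card_compl, card_map, card_univ,
      Nat.sub_add_cancel (Fintype.card_le_of_embedding f.toEmbedding)]
  have hUne : U.Nonempty := by
    obtain ⟨v, hv⟩ := not_forall.1 hf
    exact ⟨v, by simpa [U] using hv⟩
  have hcomp := card_le_card_of_closed (U := U) hk hβ
    (C := fun c : H.ConnectedComponent =>
      (univ.filter (H.connectedComponentMk · = c)).map f.toEmbedding)
    (fun c => by
      obtain ⟨w, rfl⟩ := c.exists_rep
      exact ⟨f w, mem_map_of_mem _ (mem_filter.2 ⟨mem_univ w, rfl⟩)⟩)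
    (fun c c' hcc' => by
      simp only [onFun, disjoint_map]
      exact disjoint_filter.2 fun w _ h h' => hcc' (h ▸ h'))
    (fun c x hx y hy hxy => by
      obtain ⟨w, hw, rfl⟩ := mem_map.1 hx
      obtain ⟨w', -, rfl⟩ := mem_map.1 (not_not.1 (mem_compl.not.1 hy))
      simp only [RelEmbedding.coe_toEmbedding] at hxy ⊢
      refine mem_map_of_mem _ (mem_filter.2 ⟨mem_univ w', ?_⟩)
      exact (ConnectedComponent.connectedComponentMk_eq_of_adj
        (f.map_adj_iff.1 hxy)).symm.trans (mem_filter.1 hw).2)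
    (fun c => disjoint_compl_right_iff.2 (map_subset_map.2 (subset_univ _)))
    hUne
  rw [Nat.card_eq_fintype_card]
  omega

end BindingNumber

def SimpleGraph.Embedding.deleteVerts {G : SimpleGraph V} (s : Set V) :
    ((⊤ : G.Subgraph).deleteVerts s).coe ↪g G where
  toFun x := x.1
  inj' := Subtype.val_injective
  map_rel_iff' := by simp +contextual

lemma SimpleGraph.card_verts_deleteVerts_top_add_ncard [Finite V] (G : SimpleGraph V)
    (s : Set V) : Nat.card ((⊤ : G.Subgraph).deleteVerts s).verts + s.ncard = Nat.card V := by
  rw [Nat.card_coe_set_eq, Subgraph.deleteVerts_verts, Subgraph.verts_top,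
    ← Set.compl_eq_univ_sdiff, add_comm, Set.ncard_add_ncard_compl]

theorem stmt_13 [Fintype V] (k : ℕ) (hk : 2 ≤ k) (G : SimpleGraph V)
    (hodd : Odd (Fintype.card V)) (hβ : 1 ≤ bindingNum G k) :
    ∀ v : V, ∃ M : (G.induce ({v}ᶜ : Set V)).Subgraph, M.IsPerfectMatching := by
  intro v
  rw [tutte]
  intro W hW
  unfold IsTutteViolator at hW
  have hcomp := card_connectedComponent_add_card_le hk hβ
    ((Embedding.induce _).comp (Embedding.deleteVerts W))
    fun h => by obtain ⟨x, hx⟩ := h v; exact x.1.2 hx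
  have hcard := (G.induce {v}ᶜ).card_verts_deleteVerts_top_add_ncard W
  have hv : Nat.card ({v}ᶜ : Set V) + 1 = Fintype.card V := by
    rw [Nat.card_coe_set_eq, ← Set.ncard_singleton v, add_comm, Set.ncard_add_ncard_compl,
      Nat.card_eq_fintype_card]
  have hpar := odd_ncard_oddComponents ((⊤ : (G.induce {v}ᶜ).Subgraph).deleteVerts W).coe
  have hle := Set.ncard_le_card ((⊤ : (G.induce {v}ᶜ).Subgraph).deleteVerts W).coe.oddComponents
  rw [← Nat.card_eq_fintype_card] at hcomp
  rw [Nat.odd_iff, Nat.odd_iff] at hpar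
  rw [Nat.odd_iff] at hodd
  omega
end
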